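/- Let M be an m × n matrix whose entries are multi-affine polynomials over a field, and suppose each variable appearing in M appears only in entries of a single row, or only in entries of a single column. Then the determinant of every square minor of M (in particular of M itself when m = n) is a multi-affine polynomial. -/
import Mathlib


/-- A multivariate polynomial is multi-affine when every variable has degree at
most one in it. -/
def MultiAffine {σ R : Type} [CommSemiring R] (p : MvPolynomial σ R) : Prop :=
  ∀ i, p.degreeOf i ≤ 1

lemma mem_vars_of_degreeOf_ne_zero {σ R : Type} [CommSemiring R] [DecidableEq σ]
    {p : MvPolynomial σ R} {x : σ} (h : p.degreeOf x ≠ 0) : x ∈ p.vars := by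
  classical
  rw [MvPolynomial.degreeOf_eq_sup] at h
  by_contra hx
  apply h
  refine Nat.le_zero.mp (Finset.sup_le fun d hd => ?_)
  by_contra hdx
  exact hx ((MvPolynomial.mem_vars x).mpr ⟨d, hd, Finsupp.mem_support_iff.mpr
    (fun h0 => hdx (by rw [h0]))⟩)

/-- If the entries of a matrix are multi-affine polynomials and each variable
appears only within a single row or only within a single column, then the
determinant of every square minor is multi-affine. -/
theorem det_minor_multiAffine (F : Type) [Field F] (σ : Type) [DecidableEq σ]
    (m n k : ℕ) (M : Matrix (Fin m) (Fin n) (MvPolynomial σ F))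
    (hEnt : ∀ i j, MultiAffine (M i j))
    (hVar : ∀ x : σ,
      (∀ i j i' j', x ∈ (M i j).vars → x ∈ (M i' j').vars → i = i') ∨
      (∀ i j i' j', x ∈ (M i j).vars → x ∈ (M i' j').vars → j = j'))
    (r : Fin k → Fin m) (c : Fin k → Fin n)
    (hr : Function.Injective r) (hc : Function.Injective c) :
    MultiAffine (Matrix.det (M.submatrix r c)) := by
  intro x
  classical
  rw [Matrix.det_apply]
  refine le_trans (MvPolynomial.degreeOf_sum_le _ _ _) (Finset.sup_le fun τ _ => ?_)
  have hsmul : MvPolynomial.degreeOf x (Equiv.Perm.sign τ • ∏ i, M.submatrix r c (τ i) i)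
      = MvPolynomial.degreeOf x (∏ i, M.submatrix r c (τ i) i) := by
    rcases Int.units_eq_one_or (Equiv.Perm.sign τ) with h | h <;> rw [h]
    · rw [one_smul]
    · rw [Units.neg_smul, one_smul, MvPolynomial.degreeOf_neg]
  rw [hsmul]
  refine le_trans (MvPolynomial.degreeOf_prod_le _ _ _) ?_
  set f : Fin k → ℕ := fun i => MvPolynomial.degreeOf x (M.submatrix r c (τ i) i) with hf
  have hvars : ∀ j, f j ≠ 0 → x ∈ (M (r (τ j)) (c j)).vars := fun j hj =>
    mem_vars_of_degreeOf_ne_zero hj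
  have huniq : ∀ i j, f i ≠ 0 → f j ≠ 0 → i = j := by
    intro i j hi hj
    rcases hVar x with h | h
    · exact τ.injective (hr (h _ _ _ _ (hvars i hi) (hvars j hj)))
    · exact hc (h _ _ _ _ (hvars i hi) (hvars j hj))
  by_cases hex : ∃ i, f i ≠ 0
  · obtain ⟨i0, hi0⟩ := hex
    have : ∑ i, f i = f i0 :=
      Finset.sum_eq_single_of_mem i0 (Finset.mem_univ _)
        (fun i _ hne => by by_contra h; exact hne (huniq i i0 h hi0))
    rw [this]
    exact hEnt _ _ x
  · push_neg at hex
    simp [hex]
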